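/- Cheeger's inequality (easy direction): for any finite graph G, the Cheeger constant satisfies β(G) ≥ λ_2(G)/2, where λ_2(G) is the second-smallest eigenvalue of the graph Laplacian. -/

import Mathlib

/-!
Test the Rayleigh quotient with `x = 1_U - (|U|/n)·1`, which sums to zero. Its Laplacian
quadratic form `Σ_{ij ∈ E} (x_i - x_j)²` counts the edges of `δ(U)`, and `x ⬝ x = |U||Uᶜ|/n`,
so `λ₂ · |U||Uᶜ|/n ≤ |δ(U)|`. As `max(|U|, |Uᶜ|) ≥ n/2`, the left side is at least
`λ₂/2 · min(|U|, |Uᶜ|)`, so `λ₂/2` belongs to the set whose supremum is `β(G)`.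
With at most one vertex there is no admissible test vector and `λ₂ = sInf ∅ = 0 ≤ β(G)`.
-/

/-- The edge boundary `δ(U)`: edges of `G` with exactly one endpoint in `U`. -/
def edgeBoundary {V : Type*} (G : SimpleGraph V) (U : Set V) : Set (Sym2 V) :=
  {e | e ∈ G.edgeSet ∧ (∃ a, a ∈ e ∧ a ∈ U) ∧ (∃ b, b ∈ e ∧ b ∉ U)}

/-- The Cheeger constant `β(G)`: the largest real `β` such that
`|δ(U)| ≥ β · min(|U|, |V \ U|)` for all `U ⊆ V`. -/
noncomputable def cheegerConst {V : Type*} [Fintype V] (G : SimpleGraph V) : ℝ :=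
  sSup {β : ℝ | ∀ U : Set V,
    β * min (U.ncard : ℝ) ((Uᶜ : Set V).ncard : ℝ) ≤ ((edgeBoundary G U).ncard : ℝ)}

/-- The second-smallest Laplacian eigenvalue, via the variational (Rayleigh quotient)
characterization: `λ₂ = inf { xᵀLx / xᵀx : x ⊥ 1, x ≠ 0 }`. -/
noncomputable def lambda2 {V : Type*} [Fintype V] (L : Matrix V V ℝ) : ℝ :=
  sInf {r : ℝ | ∃ x : V → ℝ, x ≠ 0 ∧ (∑ w, x w) = 0 ∧
    r = dotProduct x (L.mulVec x) / dotProduct x x}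

open Matrix

section RayleighQuotient

variable {V : Type*} [Fintype V]

theorem dotProduct_mulVec_div_dotProduct_self_nonneg {L : Matrix V V ℝ} (hL : L.PosSemidef)
    (x : V → ℝ) : 0 ≤ x ⬝ᵥ (L *ᵥ x) / x ⬝ᵥ x := by
  have hnum : 0 ≤ x ⬝ᵥ (L *ᵥ x) := by simpa using hL.dotProduct_mulVec_nonneg x
  exact div_nonneg hnum (Finset.sum_nonneg fun i _ => mul_self_nonneg (x i))

theorem lambda2_nonneg {L : Matrix V V ℝ} (hL : L.PosSemidef) : 0 ≤ lambda2 L :=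
  Real.sInf_nonneg <| by
    rintro _ ⟨x, -, -, rfl⟩
    exact dotProduct_mulVec_div_dotProduct_self_nonneg hL x

theorem lambda2_le {L : Matrix V V ℝ} (hL : L.PosSemidef) {x : V → ℝ} (hx : x ≠ 0)
    (hsum : ∑ w, x w = 0) : lambda2 L ≤ x ⬝ᵥ (L *ᵥ x) / x ⬝ᵥ x :=
  csInf_le ⟨0, by rintro _ ⟨y, -, -, rfl⟩; exact dotProduct_mulVec_div_dotProduct_self_nonneg hL y⟩
    ⟨x, hx, hsum, rfl⟩

theorem lambda2_eq_zero_of_subsingleton [Subsingleton V] (L : Matrix V V ℝ) : lambda2 L = 0 := by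
  rw [lambda2]
  convert Real.sInf_empty
  refine Set.eq_empty_of_forall_notMem ?_
  rintro _ ⟨x, hx, hsum, -⟩
  obtain ⟨v, hv⟩ := Function.ne_iff.1 hx
  exact hv (by rwa [Fintype.sum_subsingleton _ v] at hsum)

end RayleighQuotient

section CutVector

variable {V : Type*} [Fintype V]

noncomputable def cutVector (U : Set V) (v : V) : ℝ := U.indicator 1 v - U.ncard / Fintype.card V

theorem sum_indicator_one_eq_ncard (U : Set V) : ∑ v, U.indicator (1 : V → ℝ) v = U.ncard := by
  classical
  simp only [Set.indicator_apply, Pi.one_apply, Finset.sum_boole, Set.ncard_eq_toFinset_card',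
    Set.filter_mem_univ_eq_toFinset]

theorem ncard_add_ncard_compl_eq_card (U : Set V) :
    (U.ncard + Uᶜ.ncard : ℝ) = Fintype.card V := by
  exact_mod_cast (Set.ncard_add_ncard_compl U).trans Nat.card_eq_fintype_card

theorem sum_cutVector (U : Set V) : ∑ v, cutVector U v = 0 := by
  rcases isEmpty_or_nonempty V with hV | hV
  · exact Finset.sum_of_isEmpty _
  simp only [cutVector, Finset.sum_sub_distrib, sum_indicator_one_eq_ncard, Finset.sum_const,
    Finset.card_univ, nsmul_eq_mul]
  rw [mul_div_cancel₀ _ (by positivity), sub_self]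

theorem cutVector_dotProduct_self (U : Set V) :
    cutVector U ⬝ᵥ cutVector U = U.ncard * Uᶜ.ncard / Fintype.card V := by
  rcases isEmpty_or_nonempty V with hV | hV
  · simp [dotProduct]
  set c : ℝ := U.ncard / Fintype.card V with hc
  have hsq : ∀ v, cutVector U v * cutVector U v = U.indicator 1 v * (1 - 2 * c) + c ^ 2 := by
    intro v
    by_cases hv : v ∈ U <;> simp [cutVector, hv, ← hc] <;> ring
  have hn : (Fintype.card V : ℝ) ≠ 0 := by positivity
  simp only [dotProduct, hsq, Finset.sum_add_distrib, ← Finset.sum_mul, sum_indicator_one_eq_ncard,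
    Finset.sum_const, Finset.card_univ, nsmul_eq_mul, hc]
  rw [← ncard_add_ncard_compl_eq_card U] at hn ⊢
  field_simp
  ring

theorem cutVector_ne_zero {U : Set V} (hU : U.Nonempty) (hUc : Uᶜ.Nonempty) :
    cutVector U ≠ 0 := by
  obtain ⟨u, hu⟩ := hU
  obtain ⟨w, hw⟩ := hUc
  have hdiff : cutVector U u - cutVector U w = 1 := by
    simp [cutVector, hu, Set.notMem_of_mem_compl hw]
  intro h
  simp [h] at hdiff

end CutVector

theorem min_div_two_le_mul_div_add {a b : ℝ} (ha : 0 ≤ a) (hb : 0 ≤ b) :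
    min a b / 2 ≤ a * b / (a + b) := by
  rcases (add_nonneg ha hb).eq_or_lt with hab | hab
  · simp [(add_eq_zero_iff_of_nonneg ha hb).1 hab.symm]
  rw [div_le_div_iff₀ two_pos hab]
  rcases le_total a b with h | h
  · rw [min_eq_left h]; nlinarith
  · rw [min_eq_right h]; nlinarith

namespace SimpleGraph

variable {V : Type*}

def cutGraph (G : SimpleGraph V) (U : Set V) : SimpleGraph V where
  Adj a b := G.Adj a b ∧ (a ∈ U ↔ b ∉ U)
  symm := ⟨fun _ _ h => ⟨h.1.symm, by tauto⟩⟩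
  loopless := ⟨fun _ h => h.1.ne rfl⟩

theorem edgeSet_cutGraph (G : SimpleGraph V) (U : Set V) :
    (G.cutGraph U).edgeSet = edgeBoundary G U := by
  ext e
  induction e using Sym2.ind with
  | _ a b =>
    simp only [mem_edgeSet, cutGraph, edgeBoundary, Set.mem_ofPred_eq, Sym2.mem_iff,
      exists_eq_or_imp, exists_eq_left]
    tauto

variable [Fintype V] (G : SimpleGraph V) [DecidableRel G.Adj]

theorem sum_adj_sq_sub_indicator (U : Set V) :
    (∑ i, ∑ j, if G.Adj i j then (U.indicator (1 : V → ℝ) i - U.indicator 1 j) ^ 2 else 0)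
      = 2 * ((edgeBoundary G U).ncard : ℝ) := by
  classical
  have hsq : ∀ i j, (if G.Adj i j then (U.indicator (1 : V → ℝ) i - U.indicator 1 j) ^ 2 else 0)
      = if (G.cutGraph U).Adj i j then 1 else 0 := by
    intro i j
    by_cases hi : i ∈ U <;> by_cases hj : j ∈ U <;> simp [cutGraph, hi, hj]
  simp_rw [hsq, ← Fintype.sum_prod_type', Finset.sum_boole]
  rw [← edgeSet_cutGraph, ← coe_edgeFinset, Set.ncard_coe_finset]
  exact_mod_cast (two_mul_card_edgeFinset (G.cutGraph U)).symm

theorem cutVector_dotProduct_lapMatrix_mulVec [DecidableEq V] (U : Set V) :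
    cutVector U ⬝ᵥ (G.lapMatrix ℝ *ᵥ cutVector U) = (edgeBoundary G U).ncard := by
  rw [← toLinearMap₂'_apply', lapMatrix_toLinearMap₂']
  simp only [cutVector, sub_sub_sub_cancel_right]
  rw [sum_adj_sq_sub_indicator]
  ring

theorem lambda2_lapMatrix_mul_le [DecidableEq V] {U : Set V} (hU : U.Nonempty)
    (hUc : Uᶜ.Nonempty) :
    lambda2 (G.lapMatrix ℝ) * (U.ncard * Uᶜ.ncard / Fintype.card V) ≤
      (edgeBoundary G U).ncard := by
  have hle := lambda2_le (posSemidef_lapMatrix ℝ G) (cutVector_ne_zero hU hUc) (sum_cutVector U)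
  rw [cutVector_dotProduct_lapMatrix_mulVec, cutVector_dotProduct_self] at hle
  have hpos : (0 : ℝ) < U.ncard * Uᶜ.ncard / Fintype.card V := by
    have := (Set.ncard_pos U.toFinite).2 hU
    have := (Set.ncard_pos Uᶜ.toFinite).2 hUc
    have : 0 < Fintype.card V := Fintype.card_pos_iff.2 ⟨hU.some⟩
    positivity
  exact (le_div_iff₀ hpos).1 hle

theorem lambda2_lapMatrix_div_two_mul_min_le [DecidableEq V] (U : Set V) :
    lambda2 (G.lapMatrix ℝ) / 2 * min (U.ncard : ℝ) (Uᶜ.ncard : ℝ) ≤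
      (edgeBoundary G U).ncard := by
  rcases U.eq_empty_or_nonempty with rfl | hU
  · simp
  rcases Uᶜ.eq_empty_or_nonempty with hUc | hUc
  · simp [Set.compl_empty_iff.1 hUc]
  calc lambda2 (G.lapMatrix ℝ) / 2 * min (U.ncard : ℝ) (Uᶜ.ncard : ℝ)
      = lambda2 (G.lapMatrix ℝ) * (min (U.ncard : ℝ) (Uᶜ.ncard : ℝ) / 2) := by ring
    _ ≤ lambda2 (G.lapMatrix ℝ) * (U.ncard * Uᶜ.ncard / Fintype.card V) := by
      rw [← ncard_add_ncard_compl_eq_card]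
      exact mul_le_mul_of_nonneg_left (min_div_two_le_mul_div_add (by positivity) (by positivity))
        (lambda2_nonneg (posSemidef_lapMatrix ℝ G))
    _ ≤ (edgeBoundary G U).ncard := lambda2_lapMatrix_mul_le G hU hUc

end SimpleGraph

theorem cheegerConst_nonneg {V : Type*} [Fintype V] (G : SimpleGraph V) : 0 ≤ cheegerConst G :=
  Real.sSup_nonneg' ⟨0, fun U => by simp, le_rfl⟩

theorem le_cheegerConst {V : Type*} [Fintype V] [Nontrivial V] (G : SimpleGraph V) {β : ℝ}
    (hβ : ∀ U : Set V, β * min (U.ncard : ℝ) (Uᶜ.ncard : ℝ) ≤ (edgeBoundary G U).ncard) :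
    β ≤ cheegerConst G := by
  refine le_csSup ?_ hβ
  obtain ⟨a, b, hab⟩ := exists_pair_ne V
  have hmin : (1 : ℝ) ≤ min (({a} : Set V).ncard : ℝ) (({a}ᶜ : Set V).ncard : ℝ) := by
    have : 0 < ({a}ᶜ : Set V).ncard := (Set.ncard_pos (Set.toFinite _)).2 ⟨b, hab.symm⟩
    simp only [Set.ncard_singleton, Nat.cast_one, le_min_iff, le_refl, true_and]
    exact_mod_cast this
  refine ⟨max 0 (edgeBoundary G {a}).ncard, fun γ hγ => ?_⟩
  rcases le_or_gt γ 0 with hγ0 | hγ0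
  · exact hγ0.trans (le_max_left _ _)
  · exact le_max_of_le_right ((le_mul_of_one_le_right hγ0.le hmin).trans (hγ {a}))

/-- Cheeger's inequality (easy direction): for any finite graph `G`,
`β(G) ≥ λ₂(G)/2`, where `λ₂(G)` is the second-smallest eigenvalue of the graph
Laplacian. -/
theorem stmt9 {V : Type*} [Fintype V] [DecidableEq V]
    (G : SimpleGraph V) [DecidableRel G.Adj] :
    lambda2 (G.lapMatrix ℝ) / 2 ≤ cheegerConst G := by
  rcases subsingleton_or_nontrivial V with _ | _
  · rw [lambda2_eq_zero_of_subsingleton, zero_div]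
    exact cheegerConst_nonneg G
  · exact le_cheegerConst G G.lambda2_lapMatrix_div_two_mul_min_le
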